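/- arXiv:2505.01787 — 5 statements merged into one kernel-verified Lean document; each statement's English description precedes it below -/
import Mathlib

section
/- Let φ : ℝⁿ → ℝ be a convex function such that the strict superlevel set {x ∈ ℝⁿ : φ(x) > 0} is nonempty, and set τ = inf{‖v‖ : v ∈ ∂φ(x) for some x with φ(x) > 0}, where ∂φ(x) = {v ∈ ℝⁿ : ⟨v, y − x⟩ ≤ φ(y) − φ(x) for all y ∈ ℝⁿ} is the convex subdifferential. If τ > 0, then the sublevel set {x ∈ ℝⁿ : φ(x) ≤ 0} is nonempty and dist(x, {φ ≤ 0}) ≤ φ(x)/τ for every x with φ(x) > 0. -/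
open Metric Set

/-- The Moreau–Rockafellar (convex) subdifferential of `φ` at `x`. -/
def subdiff {n : ℕ} (φ : EuclideanSpace ℝ (Fin n) → ℝ) (x : EuclideanSpace ℝ (Fin n)) :
    Set (EuclideanSpace ℝ (Fin n)) :=
  {v | ∀ y, (inner ℝ v (y - x) : ℝ) ≤ φ y - φ x}

section aux

variable {n : ℕ}

local notation "E" => EuclideanSpace ℝ (Fin n)

/-- convexity of `y ↦ κ * ‖y - x‖` -/
lemma normAround_convexOn (x : E) (κ : ℝ) (hκ : 0 ≤ κ) :
    ConvexOn ℝ Set.univ (fun y : E => κ * ‖y - x‖) := by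
  refine ⟨convex_univ, fun y _ z _ a b ha hb hab => ?_⟩
  have hx' : (a + b) • x = x := by rw [hab, one_smul]
  have hsplit : a • y + b • z - x = a • (y - x) + b • (z - x) := by
    calc a • y + b • z - x = a • y + b • z - (a + b) • x := by rw [hx']
      _ = a • (y - x) + b • (z - x) := by module
  have hn : ‖a • y + b • z - x‖ ≤ a * ‖y - x‖ + b * ‖z - x‖ := by
    rw [hsplit]
    calc ‖a • (y - x) + b • (z - x)‖ ≤ ‖a • (y - x)‖ + ‖b • (z - x)‖ := norm_add_le _ _
      _ = a * ‖y - x‖ + b * ‖z - x‖ := by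
          rw [norm_smul, norm_smul, Real.norm_eq_abs, Real.norm_eq_abs,
            abs_of_nonneg ha, abs_of_nonneg hb]
  calc κ * ‖a • y + b • z - x‖ ≤ κ * (a * ‖y - x‖ + b * ‖z - x‖) := by
        exact mul_le_mul_of_nonneg_left hn hκ
    _ = a * (κ * ‖y - x‖) + b * (κ * ‖z - x‖) := by ring

/-- Existence of a small subgradient at an approximate-stationary point. -/
lemma subgrad_exists (f : E → ℝ) (hconv : ConvexOn ℝ Set.univ f)
    (hcont : Continuous f) (x₀ : E) (κ : ℝ) (hκ : 0 < κ)
    (hmin : ∀ y, f x₀ - κ * ‖y - x₀‖ ≤ f y) :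
    ∃ v : E, ‖v‖ ≤ κ ∧ ∀ y, (inner ℝ v (y - x₀) : ℝ) ≤ f y - f x₀ := by
  set A : Set (E × ℝ) := {p | f p.1 - f x₀ < p.2} with hA
  set B : Set (E × ℝ) := {p | p.2 ≤ -(κ * ‖p.1 - x₀‖)} with hB
  have hAopen : IsOpen A := by
    have : Continuous fun p : E × ℝ => f p.1 - f x₀ := (hcont.comp continuous_fst).sub
      continuous_const
    exact isOpen_lt this continuous_snd
  have hAconv : Convex ℝ A := by
    intro p hp q hq a b ha hb hab
    simp only [hA, mem_setOf_eq, Prod.smul_fst, Prod.smul_snd, Prod.fst_add, Prod.snd_add,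
      smul_eq_mul] at hp hq ⊢
    have h1 : f (a • p.1 + b • q.1) ≤ a * f p.1 + b * f q.1 :=
      hconv.2 (mem_univ _) (mem_univ _) ha hb hab
    have h2 : a * f p.1 + b * f q.1 - f x₀ < a * p.2 + b * q.2 := by
      have hfx : a * f x₀ + b * f x₀ = f x₀ := by rw [← add_mul, hab, one_mul]
      rcases eq_or_lt_of_le ha with rfl | ha'
      · have hb1 : b = 1 := by linarith
        simp only [zero_mul, zero_add, hb1, one_mul] at *
        linarith
      · rcases eq_or_lt_of_le hb with rfl | hb'
        · have ha1 : a = 1 := by linarith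
          simp only [zero_mul, add_zero, ha1, one_mul] at *
          linarith
        · have := mul_lt_mul_of_pos_left hp ha'
          have := mul_lt_mul_of_pos_left hq hb'
          nlinarith
    linarith
  have hBconv : Convex ℝ B := by
    intro p hp q hq a b ha hb hab
    simp only [hB, mem_setOf_eq, Prod.smul_fst, Prod.smul_snd, Prod.fst_add, Prod.snd_add,
      smul_eq_mul] at hp hq ⊢
    have hcv := (normAround_convexOn x₀ κ hκ.le).2 (mem_univ p.1) (mem_univ q.1) ha hb hab
    simp only [smul_eq_mul] at hcv
    nlinarith [mul_le_mul_of_nonneg_left hp ha, mul_le_mul_of_nonneg_left hq hb]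
  have hdisj : Disjoint A B := by
    rw [Set.disjoint_left]
    intro p hpA hpB
    simp only [hA, hB, mem_setOf_eq] at hpA hpB
    have := hmin p.1
    linarith
  obtain ⟨L, c, hLA, hLB⟩ := geometric_hahn_banach_open hAconv hAopen hBconv hdisj
  -- decompose L
  have hLsplit : ∀ (y : E) (t : ℝ), L (y, t) = L (y, 0) + t * L (0, 1) := by
    intro y t
    have : (y, t) = (y, (0:ℝ)) + t • ((0:E), (1:ℝ)) := by
      simp [Prod.ext_iff]
    rw [this, map_add, map_smul, smul_eq_mul]
  set s : ℝ := L (0, 1) with hs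
  -- (x₀, 0) ∈ B
  have hcx : c ≤ L (x₀, 0) := by
    have : ((x₀, (0:ℝ))) ∈ B := by simp [hB]
    simpa using hLB _ this
  have hsneg : s < 0 := by
    have h1 : L (x₀, 1) < c := by
      refine hLA _ ?_
      simp [hA]
    rw [hLsplit, one_mul] at h1
    linarith
  set σ : ℝ := -s with hσ
  have hσpos : 0 < σ := by simp [hσ]; linarith
  -- key inequality (i): for all y, L(y,0) + s * (f y - f x₀) ≤ c
  have hi : ∀ y : E, L (y, 0) + s * (f y - f x₀) ≤ c := by
    intro y
    by_contra h
    push_neg at h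
    -- c < L(y,0) + s*(f y - f x₀); pick ε = (L(y,0)+s*(fy-fx₀)-c)/σ > 0... take ε small
    set ε : ℝ := (L (y, 0) + s * (f y - f x₀) - c) / (2 * σ) with hε
    have hεpos : 0 < ε := by
      apply div_pos; linarith; linarith
    have hmem : ((y, f y - f x₀ + ε)) ∈ A := by simp [hA]; linarith
    have h2 := hLA _ hmem
    rw [hLsplit] at h2
    have hsε : s * ε = -(σ * ε) := by rw [hσ]; ring
    have hσε : σ * ε = (L (y, 0) + s * (f y - f x₀) - c) / 2 := by
      rw [hε]; field_simp
    have h3 : (f y - f x₀ + ε) * s = s * (f y - f x₀) + s * ε := by ring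
    rw [h3] at h2
    linarith
  -- key inequality (ii): for all y, c ≤ L(y,0) + σ * (κ * ‖y - x₀‖)
  have hii : ∀ y : E, c ≤ L (y, 0) + σ * (κ * ‖y - x₀‖) := by
    intro y
    have hmem : ((y, -(κ * ‖y - x₀‖))) ∈ B := by simp [hB]
    have := hLB _ hmem
    rw [hLsplit] at this
    have h2 : c ≤ L (y, 0) + -(κ * ‖y - x₀‖) * s := this
    have h3 : -(κ * ‖y - x₀‖) * s = σ * (κ * ‖y - x₀‖) := by rw [hσ]; ring
    linarith
  -- c = L(x₀, 0)
  have hceq : c = L (x₀, 0) := by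
    have h1 := hi x₀
    simp only [sub_self, mul_zero, add_zero] at h1
    linarith
  -- define v
  set ℓ : (EuclideanSpace ℝ (Fin n)) →L[ℝ] ℝ :=
    σ⁻¹ • (L.comp (ContinuousLinearMap.inl ℝ (EuclideanSpace ℝ (Fin n)) ℝ)) with hℓ
  set v : E := (InnerProductSpace.toDual ℝ (EuclideanSpace ℝ (Fin n))).symm ℓ with hv
  have hinner : ∀ y : E, (inner ℝ v y : ℝ) = σ⁻¹ * L (y, 0) := by
    intro y
    rw [hv, InnerProductSpace.toDual_symm_apply]
    simp [hℓ]
  have hsub : ∀ y, (inner ℝ v (y - x₀) : ℝ) ≤ f y - f x₀ := by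
    intro y
    have h1 := hi y
    have h2 : inner ℝ v (y - x₀) = σ⁻¹ * (L (y, 0) - L (x₀, 0)) := by
      have := hinner (y - x₀)
      rw [this]
      have : L ((y - x₀, (0:ℝ))) = L (y, 0) - L (x₀, 0) := by
        have : ((y - x₀, (0:ℝ))) = (y, (0:ℝ)) - (x₀, (0:ℝ)) := by simp [Prod.ext_iff]
        rw [this, map_sub]
      rw [this]
    rw [h2]
    rw [hceq] at h1
    -- L(y,0) - L(x₀,0) ≤ -s (fy - fx₀) = σ (fy - fx₀)
    have h3 : L (y, 0) - L (x₀, 0) ≤ σ * (f y - f x₀) := by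
      have : s * (f y - f x₀) = -(σ * (f y - f x₀)) := by rw [hσ]; ring
      linarith [h1, this.symm ▸ h1]
    calc σ⁻¹ * (L (y, 0) - L (x₀, 0)) ≤ σ⁻¹ * (σ * (f y - f x₀)) := by
          exact mul_le_mul_of_nonneg_left h3 (by positivity)
      _ = f y - f x₀ := by field_simp
  have hlow : ∀ y, -(κ * ‖y - x₀‖) ≤ (inner ℝ v (y - x₀) : ℝ) := by
    intro y
    have h1 := hii y
    rw [hceq] at h1
    have h2 : inner ℝ v (y - x₀) = σ⁻¹ * (L (y, 0) - L (x₀, 0)) := by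
      have h3 := hinner (y - x₀)
      rw [h3]
      have h4 : ((y - x₀, (0:ℝ))) = (y, (0:ℝ)) - (x₀, (0:ℝ)) := by simp [Prod.ext_iff]
      rw [h4, map_sub]
    rw [h2]
    have h3 : -(σ * (κ * ‖y - x₀‖)) ≤ L (y, 0) - L (x₀, 0) := by linarith
    have := mul_le_mul_of_nonneg_left h3 (le_of_lt (inv_pos.mpr hσpos))
    calc -(κ * ‖y - x₀‖) = σ⁻¹ * (-(σ * (κ * ‖y - x₀‖))) := by field_simp
      _ ≤ σ⁻¹ * (L (y, 0) - L (x₀, 0)) := this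
  have hnorm : ‖v‖ ≤ κ := by
    rcases eq_or_ne v 0 with h | h
    · simp [h]; linarith
    · have h1 := hlow (x₀ - v)
      simp only [sub_sub_cancel_left] at h1
      rw [inner_neg_right, real_inner_self_eq_norm_sq, norm_neg] at h1
      have hvpos : 0 < ‖v‖ := norm_pos_iff.mpr h
      nlinarith
  exact ⟨v, hnorm, hsub⟩

end aux

theorem stmt0 {n : ℕ} (φ : EuclideanSpace ℝ (Fin n) → ℝ)
    (hconv : ConvexOn ℝ Set.univ φ)
    (hne : {x | 0 < φ x}.Nonempty)
    (τ : ℝ)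
    (hτ : τ = sInf {r : ℝ | ∃ x, 0 < φ x ∧ ∃ v ∈ subdiff φ x, r = ‖v‖})
    (hτpos : 0 < τ) :
    {x | φ x ≤ 0}.Nonempty ∧
      ∀ x, 0 < φ x → Metric.infDist x {x | φ x ≤ 0} ≤ φ x / τ := by
  have hcont : Continuous φ := by
    rw [← continuousOn_univ]
    exact hconv.continuousOn isOpen_univ
  have hbdd : BddBelow {r : ℝ | ∃ x, 0 < φ x ∧ ∃ v ∈ subdiff φ x, r = ‖v‖} := by
    refine ⟨0, fun r hr => ?_⟩
    obtain ⟨x, _, v, _, rfl⟩ := hr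
    exact norm_nonneg v
  have key : ∀ x, 0 < φ x → ∀ τ', 0 < τ' → τ' < τ →
      ∃ z, φ z ≤ 0 ∧ ‖z - x‖ ≤ φ x / τ' := by
    intro x hx τ' hτ'0 hτ'τ
    set R := φ x / τ' with hR
    have hRpos : 0 < R := div_pos hx hτ'0
    set g : EuclideanSpace ℝ (Fin n) → ℝ := fun y => φ y + τ' * ‖y - x‖ with hg
    have hgc : Continuous g :=
      hcont.add (continuous_const.mul ((continuous_id.sub continuous_const).norm))
    obtain ⟨z, hzK, hzmin⟩ := (isCompact_closedBall x R).exists_isMinOn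
      ⟨x, mem_closedBall_self hRpos.le⟩ hgc.continuousOn
    by_cases hφz : φ z ≤ 0
    · refine ⟨z, hφz, ?_⟩
      have := mem_closedBall.mp hzK
      rwa [dist_eq_norm] at this
    push_neg at hφz
    exfalso
    have hgxx : g x = φ x := by simp [hg]
    have h1 : g z ≤ φ x := by
      have h0 : g z ≤ g x := hzmin (mem_closedBall_self hRpos.le)
      rwa [hgxx] at h0
    have hlt : ‖z - x‖ < R := by
      have h2 : φ z + τ' * ‖z - x‖ ≤ φ x := h1
      have : τ' * ‖z - x‖ < φ x := by linarith
      rw [hR, lt_div_iff₀ hτ'0]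
      linarith [this]
    -- g is convex
    have hgconv : ConvexOn ℝ Set.univ g := hconv.add (normAround_convexOn x τ' hτ'0.le)
    -- z is a global min of g
    have hglobal : ∀ y, g z ≤ g y := by
      intro y
      rcases eq_or_ne y z with rfl | hyz
      · exact le_refl _
      have hyznorm : 0 < ‖y - z‖ := by
        rw [norm_pos_iff, sub_ne_zero]; exact hyz
      set t : ℝ := min 1 ((R - ‖z - x‖) / ‖y - z‖) with ht
      have ht0 : 0 < t := lt_min one_pos (div_pos (by linarith) hyznorm)
      have ht1 : t ≤ 1 := min_le_left _ _
      have htb : t * ‖y - z‖ ≤ R - ‖z - x‖ := by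
        have : t ≤ (R - ‖z - x‖) / ‖y - z‖ := min_le_right _ _
        calc t * ‖y - z‖ ≤ ((R - ‖z - x‖) / ‖y - z‖) * ‖y - z‖ :=
              mul_le_mul_of_nonneg_right this hyznorm.le
          _ = R - ‖z - x‖ := by field_simp
      set w := (1 - t) • z + t • y with hw
      have hwball : w ∈ closedBall x R := by
        rw [mem_closedBall, dist_eq_norm]
        have hsplit : w - x = (z - x) + t • (y - z) := by
          rw [hw]
          have : (1 - t) • z + t • y = z + t • (y - z) := by
            rw [smul_sub, sub_smul, one_smul]; abel
          rw [this]; abel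
        calc ‖w - x‖ = ‖(z - x) + t • (y - z)‖ := by rw [hsplit]
          _ ≤ ‖z - x‖ + ‖t • (y - z)‖ := norm_add_le _ _
          _ = ‖z - x‖ + t * ‖y - z‖ := by
              rw [norm_smul, Real.norm_eq_abs, abs_of_nonneg ht0.le]
          _ ≤ R := by linarith
      have hcvx : g w ≤ (1 - t) * g z + t * g y :=
        hgconv.2 (mem_univ z) (mem_univ y) (by linarith) ht0.le (by ring)
      have hmin : g z ≤ g w := hzmin hwball
      nlinarith
    -- hence approximate stationarity
    have hmin : ∀ y, φ z - τ' * ‖y - z‖ ≤ φ y := by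
      intro y
      have h2 := hglobal y
      simp only [hg] at h2
      have htri : ‖y - x‖ ≤ ‖y - z‖ + ‖z - x‖ := norm_sub_le_norm_sub_add_norm_sub y z x
      nlinarith
    obtain ⟨v, hvnorm, hvsub⟩ := subgrad_exists φ hconv hcont z τ' hτ'0 hmin
    have hτle : τ ≤ ‖v‖ := by
      rw [hτ]
      exact csInf_le hbdd ⟨z, hφz, v, hvsub, rfl⟩
    linarith
  obtain ⟨x₀, hx₀⟩ := hne
  obtain ⟨z₀, hz₀, _⟩ := key x₀ hx₀ (τ / 2) (by linarith) (by linarith)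
  refine ⟨⟨z₀, hz₀⟩, fun x hx => ?_⟩
  set S : Set (EuclideanSpace ℝ (Fin n)) := {x | φ x ≤ 0} with hS
  have hbound : ∀ τ', 0 < τ' → τ' < τ → Metric.infDist x S ≤ φ x / τ' := by
    intro τ' h0 h1
    obtain ⟨z, hz, hznorm⟩ := key x hx τ' h0 h1
    calc Metric.infDist x S ≤ dist x z := Metric.infDist_le_dist_of_mem hz
      _ = ‖z - x‖ := by rw [dist_eq_norm, norm_sub_rev]
      _ ≤ φ x / τ' := hznorm
  by_contra h
  push_neg at h
  set d := Metric.infDist x S with hd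
  have hdpos : 0 < d := lt_trans (div_pos hx hτpos) h
  have hφd : φ x / d < τ := by
    rw [div_lt_iff₀ hdpos]
    rw [div_lt_iff₀ hτpos] at h
    linarith [h]
  set τ' : ℝ := (max (τ / 2) (φ x / d) + τ) / 2 with hτ'
  have hmax : max (τ / 2) (φ x / d) < τ := max_lt (by linarith) hφd
  have hτ'lt : τ' < τ := by
    rw [hτ']; linarith
  have hτ'pos : 0 < τ' := by
    have : τ / 2 ≤ max (τ / 2) (φ x / d) := le_max_left _ _
    rw [hτ']; linarith
  have hτ'gt : φ x / d < τ' := by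
    have h2 : φ x / d ≤ max (τ / 2) (φ x / d) := le_max_right _ _
    rw [hτ']; linarith
  have := hbound τ' hτ'pos hτ'lt
  -- d ≤ φ x / τ' but φ x / τ' < d
  have hcontra : φ x / τ' < d := by
    rw [div_lt_iff₀ hτ'pos]
    rw [div_lt_iff₀ hdpos] at hτ'gt
    linarith [hτ'gt]
  linarith
end

section
/- Let 𝒰 be a nonempty compact convex set of real m×n matrices, 𝒜_𝒰(x) = {Ax : A ∈ 𝒰}, and let Q ⊆ ℝᵐ be a closed convex cone with nonempty interior. Suppose the Slater-like condition holds: there exists u ∈ ℝⁿ with ‖u‖ ≤ 1 such that 𝒜_𝒰(u) ⊆ int Q. Then there exists α > 1 such that for every x ∈ ℝⁿ and every r > 0 there exists z ∈ ℝⁿ with ‖z − x‖ ≤ r and 𝒜_𝒰(z) + (αr)·B ⊆ 𝒜_𝒰(x) + Q + r·B, where B denotes the closed unit ball of ℝᵐ; i.e., 𝒜_𝒰 is Q-increasing at every point of ℝⁿ with exact bound at least α. -/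
open Metric Set Pointwise

/-- The set-valued map `x ↦ {A x : A ∈ 𝒰}` associated with a set `𝒰` of `m × n` matrices. -/
noncomputable def AU {m n : ℕ} (U : Set (Matrix (Fin m) (Fin n) ℝ))
    (x : EuclideanSpace ℝ (Fin n)) : Set (EuclideanSpace ℝ (Fin m)) :=
  (fun A : Matrix (Fin m) (Fin n) ℝ => Matrix.toEuclideanLin A x) '' U

theorem stmt14 {m n : ℕ} (U : Set (Matrix (Fin m) (Fin n) ℝ))
    (hUne : U.Nonempty) (hUcomp : IsCompact U) (hUcv : Convex ℝ U)
    (Q : Set (EuclideanSpace ℝ (Fin m)))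
    (hQcl : IsClosed Q) (hQcv : Convex ℝ Q)
    (hQcone : ∀ t : ℝ, 0 < t → t • Q ⊆ Q) (hQint : (interior Q).Nonempty)
    (u : EuclideanSpace ℝ (Fin n)) (hu : ‖u‖ ≤ 1) (hSlater : AU U u ⊆ interior Q) :
    ∃ α : ℝ, 1 < α ∧ ∀ (x : EuclideanSpace ℝ (Fin n)) (r : ℝ), 0 < r →
      ∃ z : EuclideanSpace ℝ (Fin n), ‖z - x‖ ≤ r ∧
        AU U z + (α * r) • Metric.closedBall (0 : EuclideanSpace ℝ (Fin m)) 1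
          ⊆ AU U x + Q + r • Metric.closedBall (0 : EuclideanSpace ℝ (Fin m)) 1 := by
  -- The image AU U u is compact, contained in the open set interior Q.
  have hfc : Continuous (fun A : Matrix (Fin m) (Fin n) ℝ => Matrix.toEuclideanLin A u) :=
    LinearMap.continuous_of_finiteDimensional
      ((LinearMap.applyₗ u).comp (Matrix.toEuclideanLin :
        Matrix (Fin m) (Fin n) ℝ ≃ₗ[ℝ] _).toLinearMap)
  have hKcomp : IsCompact (AU U u) := hUcomp.image hfc
  obtain ⟨δ, hδpos, hδ⟩ :=
    hKcomp.exists_thickening_subset_open isOpen_interior hSlater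
  refine ⟨1 + δ / 2, by linarith, ?_⟩
  intro x r hr
  refine ⟨x + r • u, ?_, ?_⟩
  · have : ‖x + r • u - x‖ = r * ‖u‖ := by
      rw [add_sub_cancel_left, norm_smul, Real.norm_eq_abs, abs_of_pos hr]
    rw [this]
    nlinarith
  · rintro w hw
    obtain ⟨p, hp, q, hq, rfl⟩ := hw
    obtain ⟨A, hA, rfl⟩ := hp
    obtain ⟨b, hb, rfl⟩ := hq
    have hbnorm : ‖b‖ ≤ 1 := mem_closedBall_zero_iff.mp hb
    have key : (Matrix.toEuclideanLin A) (x + r • u) + ((1 + δ / 2) * r) • b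
        = ((Matrix.toEuclideanLin A) x
            + r • ((Matrix.toEuclideanLin A) u + (δ / 2) • b)) + r • b := by
      rw [map_add, map_smul]
      module
    show (Matrix.toEuclideanLin A) (x + r • u) + ((1 + δ / 2) * r) • b
        ∈ AU U x + Q + r • closedBall 0 1
    rw [key]
    refine Set.add_mem_add (Set.add_mem_add ⟨A, hA, rfl⟩ ?_) (Set.smul_mem_smul_set hb)
    refine hQcone r hr (Set.smul_mem_smul_set ?_)
    refine interior_subset (hδ ?_)
    rw [Metric.mem_thickening_iff]
    refine ⟨(Matrix.toEuclideanLin A) u, ⟨A, hA, rfl⟩, ?_⟩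
    have : dist ((Matrix.toEuclideanLin A) u + (δ / 2) • b) ((Matrix.toEuclideanLin A) u)
        = ‖(δ / 2) • b‖ := by
      rw [dist_eq_norm, add_sub_cancel_left]
    rw [this, norm_smul, Real.norm_eq_abs, abs_of_pos (by linarith : (0:ℝ) < δ / 2)]
    nlinarith
end

section
/- Let 𝒰 be a nonempty compact convex set of real m×n matrices, 𝒜_𝒰(x) = {Ax : A ∈ 𝒰}, and let Q ⊆ ℝᵐ be a nonempty closed convex cone. Fix x₀ ∈ ℝⁿ with e(𝒜_𝒰(x₀), Q) > 0 and suppose 𝒜_𝒰 is Q-increasing at x₀ with constants α > 1 and δ > 0, i.e. for every r ∈ (0, δ] there exists z with ‖z − x₀‖ ≤ r and 𝒜_𝒰(z) + (αr)·B ⊆ 𝒜_𝒰(x₀) + Q + r·B. Then there exists x̂ ≠ x₀ such that e(𝒜_𝒰(x̂), Q) + (α − 1)‖x̂ − x₀‖ ≤ e(𝒜_𝒰(x₀), Q). -/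
open Metric Set Pointwise

/-- The excess of the set `A` over the set `S`: `e(A,S) = sup_{a ∈ A} dist(a, S)`. -/
noncomputable def exc {α : Type*} [MetricSpace α] (A S : Set α) : ℝ :=
  sSup ((fun a => Metric.infDist a S) '' A)

lemma le_infDist' {α : Type*} [MetricSpace α] {s : Set α} {x : α} {c : ℝ}
    (hne : s.Nonempty) (h : ∀ y ∈ s, c ≤ dist x y) : c ≤ Metric.infDist x s := by
  haveI := hne.to_subtype
  rw [Metric.infDist_eq_iInf]
  exact le_ciInf fun y => h y y.2

theorem stmt15 {m n : ℕ} (U : Set (Matrix (Fin m) (Fin n) ℝ))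
    (hUne : U.Nonempty) (hUcomp : IsCompact U) (hUcv : Convex ℝ U)
    (Q : Set (EuclideanSpace ℝ (Fin m)))
    (hQne : Q.Nonempty) (hQcl : IsClosed Q) (hQcv : Convex ℝ Q)
    (hQcone : ∀ t : ℝ, 0 < t → t • Q ⊆ Q)
    (x₀ : EuclideanSpace ℝ (Fin n)) (hx₀ : 0 < exc (AU U x₀) Q)
    (α δ : ℝ) (hα : 1 < α) (hδ : 0 < δ)
    (hincr : ∀ r ∈ Set.Ioc (0 : ℝ) δ, ∃ z : EuclideanSpace ℝ (Fin n), ‖z - x₀‖ ≤ r ∧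
        AU U z + (α * r) • Metric.closedBall (0 : EuclideanSpace ℝ (Fin m)) 1
          ⊆ AU U x₀ + Q + r • Metric.closedBall (0 : EuclideanSpace ℝ (Fin m)) 1) :
    ∃ xhat : EuclideanSpace ℝ (Fin n), xhat ≠ x₀ ∧
      exc (AU U xhat) Q + (α - 1) * ‖xhat - x₀‖ ≤ exc (AU U x₀) Q := by
  set e := exc (AU U x₀) Q with he
  have hα1 : (0:ℝ) < α - 1 := by linarith
  set r := min δ (e / (α - 1)) with hrdef
  have hr0 : 0 < r := lt_min hδ (div_pos hx₀ hα1)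
  have hrδ : r ≤ δ := min_le_left _ _
  have hre : (α - 1) * r ≤ e := by
    have := min_le_right δ (e / (α - 1))
    calc (α - 1) * r ≤ (α - 1) * (e / (α - 1)) := by
          exact mul_le_mul_of_nonneg_left this hα1.le
      _ = e := by field_simp
  -- Q + Q ⊆ Q
  have hQadd : ∀ q₁ ∈ Q, ∀ q₂ ∈ Q, q₁ + q₂ ∈ Q := by
    intro q₁ h₁ q₂ h₂
    have hmid : (1/2 : ℝ) • q₁ + (1/2 : ℝ) • q₂ ∈ Q :=
      hQcv h₁ h₂ (by norm_num) (by norm_num) (by norm_num)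
    have h2 : (2:ℝ) • ((1/2 : ℝ) • q₁ + (1/2 : ℝ) • q₂) = q₁ + q₂ := by
      rw [smul_add, smul_smul, smul_smul]; norm_num
    exact hQcone 2 (by norm_num) ⟨_, hmid, h2⟩
  -- continuity / boundedness
  have hcont : Continuous (fun A : Matrix (Fin m) (Fin n) ℝ => Matrix.toEuclideanLin A x₀) := by
    have : IsLinearMap ℝ (fun A : Matrix (Fin m) (Fin n) ℝ => Matrix.toEuclideanLin A x₀) := by
      constructor
      · intro A B; simp
      · intro c A; simp
    exact (this.mk' _).continuous_of_finiteDimensional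
  have hAUcomp : IsCompact (AU U x₀) := hUcomp.image hcont
  have hbdd : BddAbove ((fun a => Metric.infDist a Q) '' (AU U x₀)) :=
    (hAUcomp.image (continuous_infDist_pt Q)).bddAbove
  have hinfle : ∀ c ∈ AU U x₀, infDist c Q ≤ e := fun c hc =>
    le_csSup hbdd ⟨c, hc, rfl⟩
  obtain ⟨z, hz1, hz2⟩ := hincr r ⟨hr0, hrδ⟩
  -- key claim
  have key : ∀ a ∈ AU U z, infDist a Q ≤ e - (α - 1) * r := by
    intro a ha
    rcases eq_or_lt_of_le (infDist_nonneg (x := a) (s := Q)) with h0 | hd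
    · rw [← h0]; linarith
    · -- projection
      obtain ⟨p, hpQ, hp⟩ := hQcl.exists_infDist_eq_dist hQne a
      have hap : a - p ≠ 0 := by
        intro h
        rw [hp, dist_eq_norm, h, norm_zero] at hd; exact lt_irrefl _ hd
      have hapn : (0:ℝ) < ‖a - p‖ := norm_pos_iff.mpr hap
      set b : EuclideanSpace ℝ (Fin m) := ‖a - p‖⁻¹ • (a - p) with hb
      have hbn : ‖b‖ = 1 := by
        rw [hb, norm_smul, norm_inv, norm_norm, inv_mul_cancel₀ hapn.ne']
      -- variational inequality
      have hvar : ∀ w ∈ Q, (inner ℝ (a - p) (w - p) : ℝ) ≤ 0 := by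
        have hiInf : ‖a - p‖ = ⨅ w : Q, ‖a - w‖ := by
          rw [← dist_eq_norm, ← hp, infDist_eq_iInf]
          simp_rw [dist_eq_norm]
        exact (norm_eq_iInf_iff_real_inner_le_zero hQcv hpQ).mp hiInf
      set y : EuclideanSpace ℝ (Fin m) := a + (α * r) • b with hy
      have hymem : y ∈ AU U x₀ + Q + r • Metric.closedBall (0 : EuclideanSpace ℝ (Fin m)) 1 := by
        apply hz2
        exact Set.add_mem_add ha (Set.smul_mem_smul_set (by simpa [hbn] using mem_closedBall_self (by norm_num : (0:ℝ) ≤ 1)))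
      -- lower bound: infDist y Q ≥ ‖a - p‖ + α * r
      have hlow : ‖a - p‖ + α * r ≤ infDist y Q := by
        apply le_infDist' hQne
        intro q hq
        have h1 : (inner ℝ (y - q) (b) : ℝ) ≤ dist y q := by
          calc (inner ℝ (y - q) (b) : ℝ) ≤ ‖y - q‖ * ‖b‖ := real_inner_le_norm _ _
            _ = dist y q := by rw [hbn, mul_one, dist_eq_norm]
        have h2 : (inner ℝ (y - q) (b) : ℝ) = (inner ℝ (a - p) (b) : ℝ) + (α * r) * (inner ℝ (b) (b) : ℝ) + (inner ℝ (p - q) (b) : ℝ) := by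
          have : y - q = (a - p) + (α * r) • b + (p - q) := by rw [hy]; abel
          rw [this, inner_add_left, inner_add_left, real_inner_smul_left]
        have h3 : (inner ℝ (a - p) (b) : ℝ) = ‖a - p‖ := by
          rw [hb, real_inner_smul_right, real_inner_self_eq_norm_sq]
          field_simp
        have h4 : (inner ℝ (b) (b) : ℝ) = 1 := by
          rw [real_inner_self_eq_norm_sq, hbn]; norm_num
        have h5 : (0:ℝ) ≤ (inner ℝ (p - q) (b) : ℝ) := by
          rw [hb, real_inner_smul_right]
          have heq : (inner ℝ (p - q) (a - p) : ℝ) = -(inner ℝ (a - p) (q - p) : ℝ) := by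
            rw [show p - q = -(q - p) from by abel, inner_neg_left, real_inner_comm]
          rw [heq]
          have := hvar q hq
          exact mul_nonneg (inv_nonneg.mpr hapn.le) (by linarith)
        calc ‖a - p‖ + α * r ≤ (inner ℝ (y - q) (b) : ℝ) := by rw [h2, h3, h4]; linarith
          _ ≤ dist y q := h1
      -- upper bound: infDist y Q ≤ e + r
      have hup : infDist y Q ≤ e + r := by
        obtain ⟨cq, hcq, w, hw, hsum⟩ := hymem
        obtain ⟨c, hc, q, hq, hsum2⟩ := hcq
        obtain ⟨w0, hw0, rfl⟩ := hw
        have hwnorm : ‖r • w0‖ ≤ r := by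
          rw [norm_smul, Real.norm_eq_abs, abs_of_pos hr0]
          have : ‖w0‖ ≤ 1 := by simpa using hw0
          nlinarith
        have hstep : infDist y Q ≤ infDist (c + r • w0) Q := by
          apply le_infDist' hQne
          intro q' hq'
          have hyeq : y = (c + r • w0) + q := by rw [← hsum, ← hsum2]; dsimp only; abel
          calc infDist y Q ≤ dist y (q + q') := infDist_le_dist_of_mem (hQadd q hq q' hq')
            _ = dist (c + r • w0) q' := by rw [hyeq, dist_eq_norm, dist_eq_norm]; congr 1; abel
        calc infDist y Q ≤ infDist (c + r • w0) Q := hstep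
          _ ≤ infDist c Q + dist (c + r • w0) c := infDist_le_infDist_add_dist
          _ ≤ e + r := by
              have : dist (c + r • w0) c = ‖r • w0‖ := by
                rw [dist_eq_norm]; congr 1; abel
              rw [this]
              exact add_le_add (hinfle c hc) hwnorm
      have : infDist a Q = ‖a - p‖ := by rw [hp, dist_eq_norm]
      rw [this]
      linarith
  have hAUzne : (AU U z).Nonempty := hUne.image _
  have hexcz : exc (AU U z) Q ≤ e - (α - 1) * r := by
    apply csSup_le (hAUzne.image _)
    rintro _ ⟨a, ha, rfl⟩
    exact key a ha
  have hzne : z ≠ x₀ := by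
    intro h
    rw [h] at hexcz
    rw [← he] at hexcz
    nlinarith [mul_pos hα1 hr0]
  refine ⟨z, hzne, ?_⟩
  have : (α - 1) * ‖z - x₀‖ ≤ (α - 1) * r := mul_le_mul_of_nonneg_left hz1 hα1.le
  linarith
end

section
/- Let 𝒰 be a nonempty compact convex set of real m×n matrices, 𝒜_𝒰(x) = {Ax : A ∈ 𝒰}, and let Q ⊆ ℝᵐ be a closed convex cone with nonempty interior. Suppose there exist u ∈ ℝⁿ with ‖u‖ ≤ 1 and η > 0 such that 𝒜_𝒰(u) + η·B ⊆ Q. Then the core 𝒜_𝒰⁺¹(Q) = {x ∈ ℝⁿ : 𝒜_𝒰(x) ⊆ Q} is nonempty and dist(x, 𝒜_𝒰⁺¹(Q)) ≤ e(𝒜_𝒰(x), Q)/η for every x ∈ ℝⁿ. -/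
open Metric Set Pointwise

theorem stmt16 {m n : ℕ} (U : Set (Matrix (Fin m) (Fin n) ℝ))
    (hUne : U.Nonempty) (hUcomp : IsCompact U) (hUcv : Convex ℝ U)
    (Q : Set (EuclideanSpace ℝ (Fin m)))
    (hQcl : IsClosed Q) (hQcv : Convex ℝ Q)
    (hQcone : ∀ t : ℝ, 0 < t → t • Q ⊆ Q) (hQint : (interior Q).Nonempty)
    (u : EuclideanSpace ℝ (Fin n)) (hu : ‖u‖ ≤ 1) (η : ℝ) (hη : 0 < η)
    (hSlater : AU U u + η • Metric.closedBall (0 : EuclideanSpace ℝ (Fin m)) 1 ⊆ Q) :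
    {x : EuclideanSpace ℝ (Fin n) | AU U x ⊆ Q}.Nonempty ∧
    ∀ x : EuclideanSpace ℝ (Fin n),
      Metric.infDist x {x : EuclideanSpace ℝ (Fin n) | AU U x ⊆ Q}
        ≤ exc (AU U x) Q / η := by
  classical
  -- Reformulated Slater condition
  have hSlater' : ∀ A ∈ U, ∀ w : EuclideanSpace ℝ (Fin m), ‖w‖ ≤ η →
      Matrix.toEuclideanLin A u + w ∈ Q := by
    intro A hA w hw
    apply hSlater
    refine ⟨Matrix.toEuclideanLin A u, ⟨A, hA, rfl⟩, w, ?_, rfl⟩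
    refine ⟨η⁻¹ • w, ?_, smul_inv_smul₀ hη.ne' w⟩
    simp only [mem_closedBall, dist_zero_right, norm_smul, norm_inv, Real.norm_eq_abs,
      abs_of_pos hη]
    rw [inv_mul_le_iff₀ hη]
    simpa using hw
  -- Q is closed under addition
  have hQadd : ∀ a ∈ Q, ∀ b ∈ Q, a + b ∈ Q := by
    intro a ha b hb
    have h2 : (2:ℝ) • ((1/2 : ℝ) • a + (1/2 : ℝ) • b) ∈ Q := by
      apply hQcone 2 (by norm_num)
      exact ⟨_, hQcv ha hb (by norm_num) (by norm_num) (by norm_num), rfl⟩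
    have : (2:ℝ) • ((1/2 : ℝ) • a + (1/2 : ℝ) • b) = a + b := by
      rw [smul_add, smul_smul, smul_smul]; norm_num
    rwa [this] at h2
  have hQne : Q.Nonempty := by
    obtain ⟨A, hA⟩ := hUne
    exact ⟨_, hSlater' A hA 0 (by simp [hη.le])⟩
  -- u is in the core
  have hucore : AU U u ⊆ Q := by
    rintro _ ⟨A, hA, rfl⟩
    simpa using hSlater' A hA 0 (by simp [hη.le])
  -- key step: if all values of x are within r of Q, then x + (r/η)•u is in the core
  have hkey : ∀ (x : EuclideanSpace ℝ (Fin n)) (r : ℝ), 0 < r →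
      (∀ A ∈ U, Metric.infDist (Matrix.toEuclideanLin A x) Q ≤ r) →
      AU U (x + (r/η) • u) ⊆ Q := by
    intro x r hr hb
    rintro _ ⟨A, hA, rfl⟩
    obtain ⟨q, hq, hdq⟩ := hQcl.exists_infDist_eq_dist hQne (Matrix.toEuclideanLin A x)
    have hdist : ‖Matrix.toEuclideanLin A x - q‖ ≤ r := by
      rw [← dist_eq_norm, ← hdq]; exact hb A hA
    set t : ℝ := r / η with ht
    have htpos : 0 < t := div_pos hr hη
    have hAz : Matrix.toEuclideanLin A (x + t • u)
        = q + t • (Matrix.toEuclideanLin A u + t⁻¹ • (Matrix.toEuclideanLin A x - q)) := by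
      rw [map_add, map_smul, smul_add, smul_inv_smul₀ htpos.ne']
      abel
    show Matrix.toEuclideanLin A (x + t • u) ∈ Q
    rw [hAz]
    apply hQadd q hq
    apply hQcone t htpos
    refine ⟨_, hSlater' A hA _ ?_, rfl⟩
    rw [norm_smul, norm_inv, Real.norm_eq_abs, abs_of_pos htpos, inv_mul_le_iff₀ htpos, ht]
    calc ‖Matrix.toEuclideanLin A x - q‖ ≤ r := hdist
    _ = r / η * η := by field_simp
  constructor
  · exact ⟨u, hucore⟩
  · intro x
    set C := {x : EuclideanSpace ℝ (Fin n) | AU U x ⊆ Q} with hC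
    set K := AU U x with hK
    have hcont : Continuous (fun A : Matrix (Fin m) (Fin n) ℝ => Matrix.toEuclideanLin A x) := by
      exact LinearMap.continuous_of_finiteDimensional
        (({ toFun := fun A => Matrix.toEuclideanLin A x
            map_add' := fun A B => by simp only [map_add, LinearMap.add_apply]
            map_smul' := fun c A => by
              simp only [map_smul, LinearMap.smul_apply, RingHom.id_apply] } :
          Matrix (Fin m) (Fin n) ℝ →ₗ[ℝ] EuclideanSpace ℝ (Fin m)))
    have hKcomp : IsCompact K := hUcomp.image hcont
    have hKne : K.Nonempty := hUne.image _
    have hbdd : BddAbove ((fun a => Metric.infDist a Q) '' K) :=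
      ((hKcomp.image (continuous_infDist_pt Q)).isBounded).bddAbove
    set r : ℝ := exc K Q with hr
    have hb : ∀ A ∈ U, Metric.infDist (Matrix.toEuclideanLin A x) Q ≤ r := by
      intro A hA
      exact le_csSup hbdd ⟨_, ⟨A, hA, rfl⟩, rfl⟩
    have hr0 : 0 ≤ r := by
      obtain ⟨a, ha⟩ := hKne
      exact le_trans (Metric.infDist_nonneg) (le_csSup hbdd ⟨a, ha, rfl⟩)
    rcases eq_or_lt_of_le hr0 with heq | hlt
    · -- r = 0 : x itself is in the core
      have hxC : x ∈ C := by
        rintro _ ⟨A, hA, rfl⟩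
        have h0 : Metric.infDist (Matrix.toEuclideanLin A x) Q = 0 :=
          le_antisymm (heq ▸ hb A hA) Metric.infDist_nonneg
        rw [← hQcl.closure_eq]
        exact Metric.mem_closure_iff_infDist_zero hQne |>.2 h0
      rw [Metric.infDist_zero_of_mem hxC, ← heq]
      simp
    · have hz : x + (r/η) • u ∈ C := hkey x r hlt hb
      calc Metric.infDist x C ≤ dist x (x + (r/η) • u) := Metric.infDist_le_dist_of_mem hz
        _ = ‖(r/η) • u‖ := by rw [dist_eq_norm]; simp
        _ ≤ r / η := by
            rw [norm_smul, Real.norm_eq_abs, abs_of_pos (div_pos hlt hη)]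
            nlinarith [div_pos hlt hη]
end

section
/- Let 𝒰 be a nonempty compact convex set of real m×n matrices, 𝒜_𝒰(x) = {Ax : A ∈ 𝒰}; let C ⊆ ℝⁿ be nonempty closed convex and Q ⊆ ℝᵐ a closed convex pointed cone with Q ≠ {0} and Q ≠ ℝᵐ. Assume: (i) C and the core 𝒜_𝒰⁺¹(Q) = {x : 𝒜_𝒰(x) ⊆ Q} are polyhedral, i.e. each is an intersection of finitely many closed halfspaces; (ii) int Q ≠ ∅ and there exists u with ‖u‖ ≤ 1 such that 𝒜_𝒰(u) ⊆ int Q. Then, if Solv = C ∩ 𝒜_𝒰⁺¹(Q) is nonempty, there exists τ > 0 such that dist(x, Solv) ≤ τ·[e(𝒜_𝒰(x), Q) + dist(x, C)] for every x ∈ ℝⁿ. -/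
open Metric Set Pointwise

/-- A set is polyhedral if it is the intersection of finitely many closed halfspaces. -/
def IsPolyhedral {E : Type*} [NormedAddCommGroup E] [InnerProductSpace ℝ E]
    (S : Set E) : Prop :=
  ∃ (k : ℕ) (v : Fin k → E) (b : Fin k → ℝ), S = {x | ∀ i, (inner ℝ (v i) x : ℝ) ≤ b i}

variable {E : Type*} [NormedAddCommGroup E] [InnerProductSpace ℝ E]

local notation "⟪" x ", " y "⟫" => @inner ℝ _ _ x y

lemma sum_subtype_of_support {ι : Type*} [Fintype ι] {p : ι → Prop} [DecidablePred p]
    [Fintype (Subtype p)] {M : Type*} [AddCommMonoid M] (f : ι → M)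
    (h : ∀ i, ¬ p i → f i = 0) : ∑ i : Subtype p, f ↑i = ∑ i, f i := by
  rw [← Finset.sum_subtype (Finset.univ.filter p) (by simp) f]
  exact Finset.sum_filter_of_ne (fun x _ hf => by_contra fun hp => hf (h x hp))

lemma carath {ι : Type*} [Fintype ι] (v : ι → E) :
    ∀ (N : ℕ) (lam : ι → ℝ), (Finset.univ.filter (fun i => lam i ≠ 0)).card ≤ N →
    (∀ i, 0 ≤ lam i) →
    ∃ mu : ι → ℝ, (∀ i, 0 ≤ mu i) ∧ (∀ i, lam i = 0 → mu i = 0) ∧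
      (∑ i, mu i • v i = ∑ i, lam i • v i) ∧
      LinearIndependent ℝ (fun i : {i // mu i ≠ 0} => v i) := by
  classical
  intro N
  induction N with
  | zero =>
    intro lam hcard hpos
    have hall : ∀ i, lam i = 0 := by
      intro i
      by_contra h
      have hmem : i ∈ Finset.univ.filter (fun i => lam i ≠ 0) := by simp [h]
      have := Finset.card_pos.mpr ⟨i, hmem⟩
      omega
    refine ⟨lam, hpos, fun i _ => hall i, rfl, ?_⟩
    haveI : IsEmpty {i // lam i ≠ 0} := ⟨fun ⟨i, hi⟩ => hi (hall i)⟩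
    exact linearIndependent_empty_type
  | succ N ih =>
    intro lam hcard hpos
    by_cases hind : LinearIndependent ℝ (fun i : {i // lam i ≠ 0} => v i)
    · exact ⟨lam, hpos, fun i h => h, rfl, hind⟩
    · obtain ⟨g, hgsum, j0, hgj0⟩ := Fintype.not_linearIndependent_iff.mp hind
      let gh : ι → ℝ := fun i => if h : lam i ≠ 0 then g ⟨i, h⟩ else 0
      have ghsupp : ∀ i, lam i = 0 → gh i = 0 := fun i h => dif_neg (not_not.mpr h)
      have ghsum : ∑ i, gh i • v i = 0 := by
        rw [← sum_subtype_of_support (p := fun i => lam i ≠ 0) (fun i => gh i • v i)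
          (fun i h => by
            have : gh i = 0 := dif_neg h
            simp [this])]
        calc ∑ i : {i // lam i ≠ 0}, gh ↑i • v ↑i
            = ∑ i : {i // lam i ≠ 0}, g i • v ↑i :=
              Finset.sum_congr rfl (fun ⟨i, hi⟩ _ => by simp only [gh, dif_pos hi])
          _ = 0 := hgsum
      have key : ∀ h : ι → ℝ, (∑ i, h i • v i = 0) → (∀ i, lam i = 0 → h i = 0) →
          (∃ i, 0 < h i) →
          ∃ mu : ι → ℝ, (∀ i, 0 ≤ mu i) ∧ (∀ i, lam i = 0 → mu i = 0) ∧
            (∑ i, mu i • v i = ∑ i, lam i • v i) ∧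
            LinearIndependent ℝ (fun i : {i // mu i ≠ 0} => v i) := by
        rintro h hsum hsupp ⟨i0, hi0⟩
        set T : Finset ι := Finset.univ.filter (fun i => 0 < h i) with hT
        have hTne : T.Nonempty := ⟨i0, by simp [hT, hi0]⟩
        obtain ⟨j, hjT, hjmin⟩ := Finset.exists_mem_eq_inf' hTne (fun i => lam i / h i)
        have hjpos : 0 < h j := by
          have := hjT; simp only [hT, Finset.mem_filter] at this; exact this.2
        set t : ℝ := lam j / h j with ht
        have htnn : 0 ≤ t := div_nonneg (hpos j) hjpos.le
        set mu : ι → ℝ := fun i => lam i - t * h i with hmu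
        have hmupos : ∀ i, 0 ≤ mu i := by
          intro i
          by_cases hhi : 0 < h i
          · have hiT : i ∈ T := by simp [hT, hhi]
            have h1 : t ≤ lam i / h i := hjmin ▸ Finset.inf'_le _ hiT
            have h2 : t * h i ≤ lam i := by
              have hm := mul_le_mul_of_nonneg_right h1 hhi.le
              rwa [div_mul_cancel₀ _ (ne_of_gt hhi)] at hm
            simp only [hmu]; linarith
          · have : t * h i ≤ 0 := mul_nonpos_of_nonneg_of_nonpos htnn (not_lt.mp hhi)
            simp only [hmu]; linarith [hpos i]
        have hmuj : mu j = 0 := by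
          simp only [hmu, ht]; field_simp; ring
        have hmusupp : ∀ i, lam i = 0 → mu i = 0 := by
          intro i hl
          simp only [hmu, hsupp i hl, hl, mul_zero, sub_zero]
        have hmusum : ∑ i, mu i • v i = ∑ i, lam i • v i := by
          simp only [hmu, sub_smul, mul_smul, Finset.sum_sub_distrib]
          rw [← Finset.smul_sum, hsum, smul_zero, sub_zero]
        have hcard' : (Finset.univ.filter (fun i => mu i ≠ 0)).card ≤ N := by
          have hsub : Finset.univ.filter (fun i => mu i ≠ 0) ⊆
              (Finset.univ.filter (fun i => lam i ≠ 0)).erase j := by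
            intro i hi
            simp only [Finset.mem_filter, Finset.mem_univ, true_and] at hi
            refine Finset.mem_erase.mpr ⟨?_, ?_⟩
            · rintro rfl; exact hi hmuj
            · simp only [Finset.mem_filter, Finset.mem_univ, true_and]
              intro hl; exact hi (hmusupp i hl)
          have hjmem : j ∈ Finset.univ.filter (fun i => lam i ≠ 0) := by
            simp only [Finset.mem_filter, Finset.mem_univ, true_and]
            intro hl
            exact absurd (hsupp j hl ▸ hjpos) (lt_irrefl 0)
          calc (Finset.univ.filter (fun i => mu i ≠ 0)).card
              ≤ ((Finset.univ.filter (fun i => lam i ≠ 0)).erase j).card :=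
                Finset.card_le_card hsub
            _ = (Finset.univ.filter (fun i => lam i ≠ 0)).card - 1 :=
                Finset.card_erase_of_mem hjmem
            _ ≤ N := by omega
        obtain ⟨mu', h1, h2, h3, h4⟩ := ih mu hcard' hmupos
        exact ⟨mu', h1, fun i hl => h2 i (hmusupp i hl), h3.trans hmusum, h4⟩
      rcases lt_or_gt_of_ne hgj0 with hneg | hpos'
      · refine key (fun i => -gh i)
          (by simp only [neg_smul, Finset.sum_neg_distrib, ghsum, neg_zero])
          (fun i h => by simp [ghsupp i h]) ⟨j0, ?_⟩
        have : gh ↑j0 = g j0 := dif_pos j0.2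
        simp only [this]; linarith
      · refine key gh ghsum ghsupp ⟨j0, ?_⟩
        have : gh ↑j0 = g j0 := dif_pos j0.2
        rw [this]; exact hpos'

lemma Mbound {ι : Type*} [Fintype ι] (v : ι → E) :
    ∃ M : ℝ, 0 < M ∧ ∀ mu : ι → ℝ, (∀ i, 0 ≤ mu i) →
      LinearIndependent ℝ (fun i : {i // mu i ≠ 0} => v i) →
      ∑ i, mu i ≤ M * ‖∑ i, mu i • v i‖ := by
  classical
  let Δ : Finset ι → Set (ι → ℝ) := fun S =>
    {mu | (∀ i, 0 ≤ mu i) ∧ (∀ i ∉ S, mu i = 0) ∧ ∑ i, mu i = 1}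
  let Ind : Finset ι → Prop := fun S => LinearIndependent ℝ (fun i : S => v i)
  let D : Set (ι → ℝ) := ⋃ S : Finset ι, if Ind S then Δ S else ∅
  have hΔcomp : ∀ S, IsCompact (Δ S) := by
    intro S
    have h1 : IsClosed {mu : ι → ℝ | ∀ i, 0 ≤ mu i} := by
      rw [Set.setOf_forall]
      exact isClosed_iInter fun i => isClosed_le continuous_const (continuous_apply i)
    have h2 : IsClosed {mu : ι → ℝ | ∀ i ∉ S, mu i = 0} := by
      rw [Set.setOf_forall]
      refine isClosed_iInter fun i => ?_
      by_cases hi : i ∈ S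
      · simp only [hi, not_true_eq_false, false_implies, Set.setOf_true]
        exact isClosed_univ
      · simp only [hi, not_false_eq_true, true_implies]
        exact isClosed_eq (continuous_apply i) continuous_const
    have h3 : IsClosed {mu : ι → ℝ | ∑ i, mu i = 1} :=
      isClosed_eq (by continuity) continuous_const
    have heq : Δ S = {mu : ι → ℝ | ∀ i, 0 ≤ mu i} ∩
        ({mu : ι → ℝ | ∀ i ∉ S, mu i = 0} ∩ {mu : ι → ℝ | ∑ i, mu i = 1}) := by
      ext mu
      simp only [Δ, Set.mem_setOf_eq, Set.mem_inter_iff, and_assoc]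
    have hclosed : IsClosed (Δ S) := by rw [heq]; exact h1.inter (h2.inter h3)
    have hbdd : Bornology.IsBounded (Δ S) := by
      refine (Metric.isBounded_closedBall (x := (0 : ι → ℝ)) (r := 1)).subset ?_
      intro mu hmu
      rcases hmu with ⟨hnn, _, hsum⟩
      rw [Metric.mem_closedBall, dist_zero_right]
      refine pi_norm_le_iff_of_nonneg zero_le_one |>.mpr fun i => ?_
      rw [Real.norm_eq_abs, abs_of_nonneg (hnn i)]
      calc mu i ≤ ∑ j, mu j := Finset.single_le_sum (fun j _ => hnn j) (Finset.mem_univ i)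
        _ = 1 := hsum
    exact Metric.isCompact_of_isClosed_isBounded hclosed hbdd
  have hDcomp : IsCompact D := by
    refine isCompact_iUnion fun S => ?_
    by_cases h : Ind S
    · simpa [D, h] using hΔcomp S
    · simp [D, h, isCompact_empty]
  have hf : Continuous (fun mu : ι → ℝ => ‖∑ i, mu i • v i‖) := by
    refine continuous_norm.comp (continuous_finset_sum _ fun i _ => ?_)
    exact (continuous_apply i).smul continuous_const
  have hmemD : ∀ mu : ι → ℝ, (∀ i, 0 ≤ mu i) →
      LinearIndependent ℝ (fun i : {i // mu i ≠ 0} => v i) →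
      (∑ i, mu i) ≠ 0 → (fun i => (∑ j, mu j)⁻¹ * mu i) ∈ D := by
    intro mu hnn hind hs
    have hspos : 0 < ∑ j, mu j :=
      lt_of_le_of_ne (Finset.sum_nonneg fun i _ => hnn i) (Ne.symm hs)
    set S : Finset ι := Finset.univ.filter (fun i => mu i ≠ 0) with hS
    have hIndS : Ind S :=
      (linearIndependent_equiv' (Equiv.subtypeEquivRight
        (q := fun i => i ∈ S) (fun i => by simp [hS]))
        (f := fun i : {i // i ∈ S} => v ↑i)
        (g := fun i : {i // mu i ≠ 0} => v ↑i)
        (by funext i; rfl)).mp hind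
    have hmem : (fun i => (∑ j, mu j)⁻¹ * mu i) ∈ Δ S := by
      refine ⟨fun i => mul_nonneg (inv_nonneg.mpr hspos.le) (hnn i), ?_, ?_⟩
      · intro i hi
        have : mu i = 0 := by
          by_contra h; exact hi (by simp [hS, h])
        simp [this]
      · rw [← Finset.mul_sum, inv_mul_cancel₀ hs]
    exact Set.mem_iUnion.mpr ⟨S, by rw [if_pos hIndS]; exact hmem⟩
  rcases D.eq_empty_or_nonempty with hD | hD
  · refine ⟨1, one_pos, fun mu hnn hind => ?_⟩
    have hs : ∑ i, mu i = 0 := by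
      by_contra hs
      have := hmemD mu hnn hind hs
      rw [hD] at this; exact this
    rw [hs]; positivity
  · obtain ⟨mu₀, hmu₀D, hmin⟩ := hDcomp.exists_isMinOn hD hf.continuousOn
    set c := ‖∑ i, mu₀ i • v i‖ with hc
    have hcpos : 0 < c := by
      rcases Set.mem_iUnion.mp hmu₀D with ⟨S, hS⟩
      by_cases hind : Ind S
      swap
      · rw [if_neg hind] at hS; exact absurd hS (Set.notMem_empty _)
      rw [if_pos hind] at hS
      obtain ⟨hnn, hsupp, hsum⟩ := hS
      rcases eq_or_lt_of_le (norm_nonneg (∑ i, mu₀ i • v i)) with h0 | h0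
      swap
      · exact h0
      exfalso
      have hzero : ∑ i, mu₀ i • v i = 0 := by rwa [eq_comm, norm_eq_zero] at h0
      have hsub : ∑ i : {i // i ∈ S}, mu₀ ↑i • v ↑i = 0 :=
        (sum_subtype_of_support (p := fun i => i ∈ S) (fun i => mu₀ i • v i)
          (fun i hi => by show mu₀ i • v i = 0; rw [hsupp i hi, zero_smul])).trans hzero
      have hall : ∀ i : {i // i ∈ S}, mu₀ ↑i = 0 :=
        Fintype.linearIndependent_iff.mp hind (fun i => mu₀ ↑i) hsub
      have hzero' : ∑ i, mu₀ i = 0 := by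
        refine Finset.sum_eq_zero fun i _ => ?_
        by_cases hi : i ∈ S
        · exact hall ⟨i, hi⟩
        · exact hsupp i hi
      rw [hzero'] at hsum; norm_num at hsum
    refine ⟨c⁻¹, inv_pos.mpr hcpos, fun mu hnn hind => ?_⟩
    by_cases hs : ∑ i, mu i = 0
    · have hall : ∀ i, mu i = 0 := fun i =>
        (Finset.sum_eq_zero_iff_of_nonneg (fun j _ => hnn j)).mp hs i (Finset.mem_univ i)
      rw [hs]
      have h0 : ∑ i, mu i • v i = 0 := Finset.sum_eq_zero fun i _ => by rw [hall i, zero_smul]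
      rw [h0]; simp
    · have hspos : 0 < ∑ i, mu i :=
        lt_of_le_of_ne (Finset.sum_nonneg fun i _ => hnn i) (Ne.symm hs)
      have hν := hmemD mu hnn hind hs
      have hge : c ≤ ‖∑ i, ((∑ j, mu j)⁻¹ * mu i) • v i‖ := hmin hν
      have hnorm : ‖∑ i, ((∑ j, mu j)⁻¹ * mu i) • v i‖ = (∑ j, mu j)⁻¹ * ‖∑ i, mu i • v i‖ := by
        have : ∑ i, ((∑ j, mu j)⁻¹ * mu i) • v i = (∑ j, mu j)⁻¹ • ∑ i, mu i • v i := by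
          rw [Finset.smul_sum]
          exact Finset.sum_congr rfl fun i _ => by rw [← smul_smul]
        rw [this, norm_smul, Real.norm_eq_abs, abs_of_nonneg (inv_nonneg.mpr hspos.le)]
      rw [hnorm] at hge
      have := mul_le_mul_of_nonneg_left hge hspos.le
      rw [← mul_assoc, mul_inv_cancel₀ hs, one_mul] at this
      calc ∑ i, mu i ≤ c⁻¹ * ((∑ i, mu i) * c) := by
            rw [← mul_assoc, mul_comm c⁻¹, mul_assoc, inv_mul_cancel₀ (ne_of_gt hcpos), mul_one]
        _ ≤ c⁻¹ * ‖∑ i, mu i • v i‖ :=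
            mul_le_mul_of_nonneg_left this (inv_nonneg.mpr hcpos.le)

section Farkas

variable [FiniteDimensional ℝ E]

lemma indep_transfer {ι : Type*} [Fintype ι] (v : ι → E) (mu : ι → ℝ)
    [DecidablePred (fun i => mu i ≠ 0)]
    (hind : LinearIndependent ℝ (fun i : {i // mu i ≠ 0} => v i)) :
    LinearIndependent ℝ (fun i : (Finset.univ.filter (fun i => mu i ≠ 0) : Finset ι) => v i) :=
  (linearIndependent_equiv' (Equiv.subtypeEquivRight
    (q := fun i => i ∈ Finset.univ.filter (fun i => mu i ≠ 0)) (fun i => by simp))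
    (f := fun i : (Finset.univ.filter (fun i => mu i ≠ 0) : Finset ι) => v ↑i)
    (g := fun i : {i // mu i ≠ 0} => v ↑i)
    (by funext i; rfl)).mp hind

lemma farkas {ι : Type*} [Fintype ι] (v : ι → E) (A : Finset ι) (z : E)
    (h : ∀ d : E, (∀ i ∈ A, ⟪v i, d⟫ ≤ 0) → ⟪z, d⟫ ≤ 0) :
    ∃ lam : ι → ℝ, (∀ i, 0 ≤ lam i) ∧ (∀ i ∉ A, lam i = 0) ∧ z = ∑ i, lam i • v i := by
  classical
  haveI : CompleteSpace E := FiniteDimensional.complete ℝ E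
  set Cn : Set E := {w | ∃ lam : ι → ℝ, (∀ i, 0 ≤ lam i) ∧ (∀ i ∉ A, lam i = 0) ∧
    w = ∑ i, lam i • v i} with hCn
  have hzero : (0 : E) ∈ Cn := ⟨0, fun i => le_refl 0, fun i _ => rfl, by simp⟩
  have hsmul : ∀ (t : ℝ) (w : E), 0 ≤ t → w ∈ Cn → t • w ∈ Cn := by
    rintro t w ht ⟨lam, h1, h2, rfl⟩
    refine ⟨fun i => t * lam i, fun i => mul_nonneg ht (h1 i),
      fun i hi => by show t * lam i = 0; rw [h2 i hi, mul_zero], ?_⟩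
    rw [Finset.smul_sum]
    exact Finset.sum_congr rfl fun i _ => by
      show t • (lam i • v i) = (t * lam i) • v i; rw [mul_smul]
  have hvmem : ∀ i ∈ A, v i ∈ Cn := by
    intro i hi
    refine ⟨fun j => if j = i then 1 else 0,
      fun j => by by_cases h : j = i <;> simp [h],
      fun j hj => if_neg (by rintro rfl; exact hj hi), ?_⟩
    simp [ite_smul]
  have hconv : Convex ℝ Cn := by
    rintro w1 ⟨l1, hl1, hs1, rfl⟩ w2 ⟨l2, hl2, hs2, rfl⟩ a b ha hb hab
    refine ⟨fun i => a * l1 i + b * l2 i,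
      fun i => add_nonneg (mul_nonneg ha (hl1 i)) (mul_nonneg hb (hl2 i)),
      fun i hi => by show a * l1 i + b * l2 i = 0
                     rw [hs1 i hi, hs2 i hi, mul_zero, mul_zero, add_zero], ?_⟩
    rw [Finset.smul_sum, Finset.smul_sum, ← Finset.sum_add_distrib]
    refine Finset.sum_congr rfl fun i _ => ?_
    show a • (l1 i • v i) + b • (l2 i • v i) = (a * l1 i + b * l2 i) • v i
    rw [add_smul, mul_smul, mul_smul]
  have hclosed : IsClosed Cn := by
    have hdecomp : Cn = ⋃ S : Finset ι,
        (if (LinearIndependent ℝ (fun i : S => v i) ∧ S ⊆ A) then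
          (Fintype.linearCombination ℝ (fun i : S => v ↑i)) ''
            {g : S → ℝ | ∀ i, 0 ≤ g i} else ∅) := by
      apply Set.Subset.antisymm
      · rintro w ⟨lam, h1, h2, rfl⟩
        obtain ⟨mu, hm1, hm2, hm3, hm4⟩ := carath v (Finset.univ.card) lam
          (Finset.card_le_card (Finset.subset_univ _)) h1
        set S : Finset ι := Finset.univ.filter (fun i => mu i ≠ 0) with hS
        have hSA : S ⊆ A := by
          intro i hi
          simp only [hS, Finset.mem_filter, Finset.mem_univ, true_and] at hi
          by_contra hiA
          exact hi (hm2 i (h2 i hiA))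
        have hindS : LinearIndependent ℝ (fun i : S => v i) := indep_transfer v mu hm4
        refine Set.mem_iUnion.mpr ⟨S, ?_⟩
        rw [if_pos ⟨hindS, hSA⟩]
        refine ⟨fun i => mu ↑i, fun i => hm1 ↑i, ?_⟩
        rw [Fintype.linearCombination_apply]
        refine (sum_subtype_of_support (p := fun i => i ∈ S) (fun i => mu i • v i)
          (fun i hi => ?_)).trans hm3
        have : mu i = 0 := by
          by_contra hne; exact hi (by simp [hS, hne])
        show mu i • v i = 0
        rw [this, zero_smul]
      · refine Set.iUnion_subset fun S => ?_
        by_cases hc : LinearIndependent ℝ (fun i : S => v i) ∧ S ⊆ A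
        swap
        · rw [if_neg hc]; exact Set.empty_subset _
        rw [if_pos hc]
        rintro w ⟨g, hg, rfl⟩
        refine ⟨fun i => if h : i ∈ S then g ⟨i, h⟩ else 0,
          fun i => by
            show 0 ≤ if h : i ∈ S then g ⟨i, h⟩ else 0
            by_cases h : i ∈ S
            · rw [dif_pos h]; exact hg ⟨i, h⟩
            · rw [dif_neg h],
          fun i hi => dif_neg (fun hmem => hi (hc.2 hmem)), ?_⟩
        rw [Fintype.linearCombination_apply]
        refine ((sum_subtype_of_support (p := fun i => i ∈ S)
          (fun i => (if h : i ∈ S then g ⟨i, h⟩ else 0) • v i) (fun i hi => ?_)).symm.trans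
          ?_).symm
        · show (if h : i ∈ S then g ⟨i, h⟩ else 0) • v i = 0
          rw [dif_neg hi, zero_smul]
        · refine Finset.sum_congr rfl fun i _ => ?_
          show (if h : ↑i ∈ S then g ⟨↑i, h⟩ else 0) • v ↑i = g i • v ↑i
          rw [dif_pos i.2]
    rw [hdecomp]
    refine isClosed_iUnion_of_finite fun S => ?_
    by_cases hc : LinearIndependent ℝ (fun i : S => v i) ∧ S ⊆ A
    swap
    · rw [if_neg hc]; exact isClosed_empty
    rw [if_pos hc]
    have hker : LinearMap.ker (Fintype.linearCombination ℝ (fun i : S => (v ↑i : E))) = ⊥ := by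
      rw [LinearMap.ker_eq_bot']
      intro g hg
      rw [Fintype.linearCombination_apply] at hg
      exact funext (Fintype.linearIndependent_iff.mp hc.1 g hg)
    have hemb := LinearMap.isClosedEmbedding_of_injective hker
    have horth : IsClosed {g : S → ℝ | ∀ i, 0 ≤ g i} := by
      rw [Set.setOf_forall]
      exact isClosed_iInter fun i => isClosed_le continuous_const (continuous_apply i)
    exact hemb.isClosedMap _ horth
  -- separation
  by_contra hzC
  have hzCn : z ∉ Cn := hzC
  obtain ⟨f, u, hfu, huf⟩ := geometric_hahn_banach_closed_point hconv hclosed hzCn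
  have hupos : 0 < u := by simpa using hfu 0 hzero
  have hfv : ∀ i ∈ A, f (v i) ≤ 0 := by
    intro i hi
    by_contra hfpos
    push_neg at hfpos
    have ht : (0 : ℝ) < 2 * u / f (v i) := by positivity
    have hmem := hsmul _ _ ht.le (hvmem i hi)
    have := hfu _ hmem
    rw [map_smul, smul_eq_mul, div_mul_cancel₀ _ (ne_of_gt hfpos)] at this
    linarith
  set g : E := (InnerProductSpace.toDual ℝ E).symm f with hg
  have hinner : ∀ w : E, ⟪g, w⟫ = f w := fun w => InnerProductSpace.toDual_symm_apply
  have h1 : ∀ i ∈ A, ⟪v i, g⟫ ≤ 0 := fun i hi => by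
    rw [real_inner_comm, hinner]; exact hfv i hi
  have h2 := h g h1
  rw [real_inner_comm, hinner] at h2
  linarith

end Farkas

lemma hoffman {ι : Type*} [Fintype ι] [FiniteDimensional ℝ E] (v : ι → E) (b : ι → ℝ)
    (hne : {x : E | ∀ i, ⟪v i, x⟫ ≤ b i}.Nonempty) :
    ∃ τ : ℝ, 0 < τ ∧ ∀ x : E, Metric.infDist x {x : E | ∀ i, ⟪v i, x⟫ ≤ b i}
      ≤ τ * ∑ i, max 0 (⟪v i, x⟫ - b i) := by
  classical
  haveI : CompleteSpace E := FiniteDimensional.complete ℝ E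
  set P : Set E := {x : E | ∀ i, ⟪v i, x⟫ ≤ b i} with hP
  have hPconv : Convex ℝ P := by
    have : P = ⋂ i, {x : E | ⟪v i, x⟫ ≤ b i} := by rw [hP, Set.setOf_forall]
    rw [this]
    exact convex_iInter fun i => convex_halfSpace_le
      ⟨fun x y => inner_add_right _ _ _, fun c x => real_inner_smul_right _ _ _⟩ (b i)
  have hPclosed : IsClosed P := by
    have : P = ⋂ i, {x : E | ⟪v i, x⟫ ≤ b i} := by rw [hP, Set.setOf_forall]
    rw [this]
    exact isClosed_iInter fun i =>
      isClosed_le (Continuous.inner continuous_const continuous_id) continuous_const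
  obtain ⟨M, hMpos, hM⟩ := Mbound v
  refine ⟨M, hMpos, fun x => ?_⟩
  have hressum : 0 ≤ ∑ i, max 0 (⟪v i, x⟫ - b i) :=
    Finset.sum_nonneg fun i _ => le_max_left _ _
  obtain ⟨p, hpP, hproj⟩ := exists_norm_eq_iInf_of_complete_convex hne
    (hPclosed.isComplete) hPconv x
  have hchar : ∀ w ∈ P, ⟪x - p, w - p⟫ ≤ 0 :=
    (norm_eq_iInf_iff_real_inner_le_zero hPconv hpP).mp hproj
  have hdist : Metric.infDist x P = ‖x - p‖ := by
    rw [Metric.infDist_eq_iInf]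
    simp_rw [dist_eq_norm]
    exact hproj.symm
  set A : Finset ι := Finset.univ.filter (fun i => ⟪v i, p⟫ = b i) with hA
  have key : ∀ d : E, (∀ i ∈ A, ⟪v i, d⟫ ≤ 0) → ⟪x - p, d⟫ ≤ 0 := by
    intro d hd
    set T : Finset ι := Finset.univ.filter (fun i => 0 < ⟪v i, d⟫) with hT
    have hTnotA : ∀ i ∈ T, ⟪v i, p⟫ < b i := by
      intro i hiT
      have hTd : 0 < ⟪v i, d⟫ := by
        have := hiT; rw [hT, Finset.mem_filter] at this; exact this.2
      have hiA : i ∉ A := fun hiA => absurd (hd i hiA) (not_le.mpr hTd)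
      have : ⟪v i, p⟫ ≠ b i := fun he => hiA (by simp [hA, he])
      exact lt_of_le_of_ne (hpP i) this
    rcases T.eq_empty_or_nonempty with hTe | hTne
    · have hmem : p + d ∈ P := by
        intro i
        have hvi : ⟪v i, d⟫ ≤ 0 := by
          by_contra hpos
          push_neg at hpos
          have hiT : i ∈ T := by rw [hT, Finset.mem_filter]; exact ⟨Finset.mem_univ i, hpos⟩
          rw [hTe] at hiT
          exact absurd hiT (Finset.notMem_empty i)
        have := hpP i
        rw [inner_add_right]
        linarith
      have := hchar _ hmem
      simpa using this
    · set ε : ℝ := min 1 (T.inf' hTne fun i => (b i - ⟪v i, p⟫) / ⟪v i, d⟫) with hε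
      have hεpos : 0 < ε := by
        refine lt_min one_pos ?_
        rw [Finset.lt_inf'_iff]
        intro i hiT
        have hTd : 0 < ⟪v i, d⟫ := by
          have := hiT; rw [hT, Finset.mem_filter] at this; exact this.2
        exact div_pos (by linarith [hTnotA i hiT]) hTd
      have hmem : p + ε • d ∈ P := by
        intro i
        rw [inner_add_right, real_inner_smul_right]
        by_cases hdi : 0 < ⟪v i, d⟫
        · have hiT : i ∈ T := by rw [hT, Finset.mem_filter]; exact ⟨Finset.mem_univ i, hdi⟩
          have h1 : ε ≤ (b i - ⟪v i, p⟫) / ⟪v i, d⟫ :=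
            le_trans (min_le_right _ _) (Finset.inf'_le _ hiT)
          have h2 : ε * ⟪v i, d⟫ ≤ b i - ⟪v i, p⟫ := by
            rw [← le_div_iff₀ hdi]; exact h1
          linarith
        · push_neg at hdi
          have : ε * ⟪v i, d⟫ ≤ 0 := mul_nonpos_of_nonneg_of_nonpos hεpos.le hdi
          linarith [hpP i]
      have := hchar _ hmem
      rw [add_sub_cancel_left, real_inner_smul_right] at this
      nlinarith
  obtain ⟨lam, hl1, hl2, hl3⟩ := farkas v A (x - p) key
  obtain ⟨mu, hm1, hm2, hm3, hm4⟩ := carath v Finset.univ.card lam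
    (Finset.card_le_card (Finset.subset_univ _)) hl1
  have hmusumA : ∀ i, i ∉ A → mu i = 0 := fun i hi => hm2 i (hl2 i hi)
  have hMb : ∑ i, mu i ≤ M * ‖x - p‖ := by
    have := hM mu hm1 hm4
    rw [hm3, ← hl3] at this
    exact this
  have hmunn : 0 ≤ ∑ i, mu i := Finset.sum_nonneg fun i _ => hm1 i
  have hsq : ‖x - p‖ ^ 2 ≤ (∑ i, mu i) * ∑ i, max 0 (⟪v i, x⟫ - b i) := by
    have h1 : ‖x - p‖ ^ 2 = ⟪x - p, x - p⟫ := (real_inner_self_eq_norm_sq _).symm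
    have h2 : ⟪x - p, x - p⟫ = ∑ i, mu i * ⟪v i, x - p⟫ := by
      nth_rewrite 1 [hl3, ← hm3]
      rw [sum_inner]
      exact Finset.sum_congr rfl fun i _ => real_inner_smul_left _ _ _
    rw [h1, h2, Finset.mul_sum]
    refine Finset.sum_le_sum fun i _ => ?_
    by_cases hmi : mu i = 0
    · rw [hmi, zero_mul]
      exact mul_nonneg hmunn (le_max_left _ _)
    · have hiA : i ∈ A := by
        by_contra hiA; exact hmi (hmusumA i hiA)
      have hbi : ⟪v i, p⟫ = b i := by
        have := hiA; rw [hA, Finset.mem_filter] at this; exact this.2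
      have hinner : ⟪v i, x - p⟫ = ⟪v i, x⟫ - b i := by
        rw [inner_sub_right, hbi]
      rw [hinner]
      have hres : ⟪v i, x⟫ - b i ≤ max 0 (⟪v i, x⟫ - b i) := le_max_right _ _
      have hmile : mu i ≤ ∑ j, mu j := Finset.single_le_sum (fun j _ => hm1 j)
        (Finset.mem_univ i)
      nlinarith [hm1 i, le_max_left (0:ℝ) (⟪v i, x⟫ - b i)]
  rw [hdist]
  rcases eq_or_lt_of_le (norm_nonneg (x - p)) with h0 | h0
  · rw [← h0]
    positivity
  · have hchain : ‖x - p‖ ^ 2 ≤ M * ‖x - p‖ * ∑ i, max 0 (⟪v i, x⟫ - b i) :=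
      le_trans hsq (mul_le_mul_of_nonneg_right hMb hressum)
    nlinarith

lemma residual_le (v : E) (b : ℝ) (C : Set E) (hC : C.Nonempty)
    (hsat : ∀ c ∈ C, ⟪v, c⟫ ≤ b) (x : E) :
    max 0 (⟪v, x⟫ - b) ≤ ‖v‖ * Metric.infDist x C := by
  haveI : Nonempty C := hC.to_subtype
  refine max_le (mul_nonneg (norm_nonneg v) Metric.infDist_nonneg) ?_
  have h1 : ∀ c ∈ C, ⟪v, x⟫ - b ≤ ‖v‖ * dist x c := by
    intro c hc
    calc ⟪v, x⟫ - b ≤ ⟪v, x - c⟫ := by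
          rw [inner_sub_right]; linarith [hsat c hc]
      _ ≤ ‖v‖ * ‖x - c‖ := real_inner_le_norm _ _
      _ = ‖v‖ * dist x c := by rw [dist_eq_norm]
  rcases eq_or_lt_of_le (norm_nonneg v) with hv | hv
  · obtain ⟨c₀, hc₀⟩ := hC
    have := h1 c₀ hc₀
    rw [← hv] at this ⊢
    simpa using this
  · have h2 : (⟪v, x⟫ - b) / ‖v‖ ≤ Metric.infDist x C := by
      rw [Metric.infDist_eq_iInf]
      refine le_ciInf fun c => ?_
      rw [div_le_iff₀ hv, mul_comm]
      exact h1 c c.2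
    calc ⟪v, x⟫ - b = ‖v‖ * ((⟪v, x⟫ - b) / ‖v‖) := by field_simp
      _ ≤ ‖v‖ * Metric.infDist x C := mul_le_mul_of_nonneg_left h2 hv.le

noncomputable def evalMap {m n : ℕ} (x : EuclideanSpace ℝ (Fin n)) :
    Matrix (Fin m) (Fin n) ℝ →ₗ[ℝ] EuclideanSpace ℝ (Fin m) where
  toFun A := Matrix.toEuclideanLin A x
  map_add' A B := by simp [map_add]
  map_smul' c A := by simp [map_smul]

lemma AU_eq_image {m n : ℕ} (U : Set (Matrix (Fin m) (Fin n) ℝ))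
    (x : EuclideanSpace ℝ (Fin n)) : AU U x = evalMap x '' U := rfl

lemma AU_compact {m n : ℕ} {U : Set (Matrix (Fin m) (Fin n) ℝ)} (hUcomp : IsCompact U)
    (x : EuclideanSpace ℝ (Fin n)) : IsCompact (AU U x) := by
  rw [AU_eq_image]
  exact hUcomp.image (evalMap x).continuous_of_finiteDimensional

lemma exc_nonneg_AU {m n : ℕ} {U : Set (Matrix (Fin m) (Fin n) ℝ)} (hUne : U.Nonempty)
    (hUcomp : IsCompact U) (Q : Set (EuclideanSpace ℝ (Fin m)))
    (x : EuclideanSpace ℝ (Fin n)) : 0 ≤ exc (AU U x) Q := by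
  obtain ⟨A, hA⟩ := hUne
  have hmem : Metric.infDist (Matrix.toEuclideanLin A x) Q ∈
      (fun a => Metric.infDist a Q) '' (AU U x) := ⟨_, ⟨A, hA, rfl⟩, rfl⟩
  have hbdd : BddAbove ((fun a => Metric.infDist a Q) '' (AU U x)) :=
    ((AU_compact hUcomp x).image (Metric.continuous_infDist_pt Q)).bddAbove
  exact le_trans Metric.infDist_nonneg (le_csSup hbdd hmem)

lemma infDist_le_exc_AU {m n : ℕ} {U : Set (Matrix (Fin m) (Fin n) ℝ)}
    (hUcomp : IsCompact U) (Q : Set (EuclideanSpace ℝ (Fin m)))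
    (x : EuclideanSpace ℝ (Fin n)) {A : Matrix (Fin m) (Fin n) ℝ} (hA : A ∈ U) :
    Metric.infDist (Matrix.toEuclideanLin A x) Q ≤ exc (AU U x) Q := by
  have hbdd : BddAbove ((fun a => Metric.infDist a Q) '' (AU U x)) :=
    ((AU_compact hUcomp x).image (Metric.continuous_infDist_pt Q)).bddAbove
  exact le_csSup hbdd ⟨_, ⟨A, hA, rfl⟩, rfl⟩

lemma add_mem_of_cone {F : Type*} [NormedAddCommGroup F] [InnerProductSpace ℝ F]
    {Q : Set F} (hQcv : Convex ℝ Q) (hQcone : ∀ t : ℝ, 0 < t → t • Q ⊆ Q)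
    {q z : F} (hq : q ∈ Q) (hz : z ∈ Q) : q + z ∈ Q := by
  have hmid : (1/2 : ℝ) • q + (1/2 : ℝ) • z ∈ Q :=
    hQcv hq hz (by norm_num) (by norm_num) (by norm_num)
  have h2 : (2 : ℝ) • ((1/2 : ℝ) • q + (1/2 : ℝ) • z) ∈ Q :=
    hQcone 2 (by norm_num) (Set.smul_mem_smul_set hmid)
  have : (2 : ℝ) • ((1/2 : ℝ) • q + (1/2 : ℝ) • z) = q + z := by
    rw [smul_add, smul_smul, smul_smul]; norm_num
  rwa [this] at h2

lemma core_dist_bound {m n : ℕ} (U : Set (Matrix (Fin m) (Fin n) ℝ))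
    (hUne : U.Nonempty) (hUcomp : IsCompact U)
    (Q : Set (EuclideanSpace ℝ (Fin m))) (hQcl : IsClosed Q) (hQcv : Convex ℝ Q)
    (hQcone : ∀ t : ℝ, 0 < t → t • Q ⊆ Q) (hQ0 : (0 : EuclideanSpace ℝ (Fin m)) ∈ Q)
    (u : EuclideanSpace ℝ (Fin n)) (hu : ‖u‖ ≤ 1) (hSlater : AU U u ⊆ interior Q) :
    ∃ r : ℝ, 0 < r ∧ ∀ x, Metric.infDist x {y : EuclideanSpace ℝ (Fin n) | AU U y ⊆ Q}
      ≤ r⁻¹ * exc (AU U x) Q := by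
  obtain ⟨r, hrpos, hr⟩ := (AU_compact hUcomp u).exists_cthickening_subset_open
    isOpen_interior hSlater
  have hball : ∀ A ∈ U, Metric.closedBall (Matrix.toEuclideanLin A u) r ⊆ Q := by
    intro A hA y hy
    have h1 : y ∈ Metric.cthickening r (AU U u) :=
      Metric.mem_cthickening_of_dist_le y _ r _ ⟨A, hA, rfl⟩
        (by rwa [Metric.mem_closedBall] at hy)
    exact interior_subset (hr h1)
  refine ⟨r, hrpos, fun x => ?_⟩
  set e : ℝ := exc (AU U x) Q with he
  have hennneg : 0 ≤ e := exc_nonneg_AU hUne hUcomp Q x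
  have hKmem : x + (e / r) • u ∈ {y : EuclideanSpace ℝ (Fin n) | AU U y ⊆ Q} := by
    rintro y ⟨A, hA, rfl⟩
    show Matrix.toEuclideanLin A (x + (e / r) • u) ∈ Q
    have hy : Matrix.toEuclideanLin A (x + (e / r) • u) =
        Matrix.toEuclideanLin A x + (e / r) • Matrix.toEuclideanLin A u := by
      rw [map_add, map_smul]
    obtain ⟨q, hqQ, hqdist⟩ := hQcl.exists_infDist_eq_dist ⟨0, hQ0⟩
      (Matrix.toEuclideanLin A x)
    have hdistle : dist (Matrix.toEuclideanLin A x) q ≤ e :=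
      hqdist ▸ infDist_le_exc_AU hUcomp Q x hA
    by_cases hezero : e = 0
    · have hxq : Matrix.toEuclideanLin A x = q := by
        rw [← dist_eq_zero]
        exact le_antisymm (hezero ▸ hdistle) dist_nonneg
      rw [hy, hezero]
      simpa [hxq] using hqQ
    · have hepos : 0 < e := lt_of_le_of_ne hennneg (Ne.symm hezero)
      set w : EuclideanSpace ℝ (Fin m) :=
        Matrix.toEuclideanLin A u + (r / e) • (Matrix.toEuclideanLin A x - q) with hw
      have hwQ : w ∈ Q := by
        refine hball A hA ?_
        rw [Metric.mem_closedBall, hw, dist_eq_norm, add_sub_cancel_left, norm_smul,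
          Real.norm_eq_abs, abs_of_pos (div_pos hrpos hepos)]
        calc r / e * ‖Matrix.toEuclideanLin A x - q‖
            ≤ r / e * e := by
              refine mul_le_mul_of_nonneg_left ?_ (div_pos hrpos hepos).le
              rw [← dist_eq_norm]; exact hdistle
          _ = r := by field_simp
      have hsw : (e / r) • w ∈ Q :=
        hQcone (e / r) (div_pos hepos hrpos) (Set.smul_mem_smul_set hwQ)
      have hfinal : Matrix.toEuclideanLin A x + (e / r) • Matrix.toEuclideanLin A u =
          q + (e / r) • w := by
        rw [hw, smul_add, smul_smul,
          show e / r * (r / e) = 1 by field_simp, one_smul]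
        abel
      rw [hy, hfinal]
      exact add_mem_of_cone hQcv hQcone hqQ hsw
  calc Metric.infDist x {y : EuclideanSpace ℝ (Fin n) | AU U y ⊆ Q}
      ≤ dist x (x + (e / r) • u) := Metric.infDist_le_dist_of_mem hKmem
    _ = ‖(e / r) • u‖ := by rw [dist_self_add_right]
    _ = (e / r) * ‖u‖ := by
        rw [norm_smul, Real.norm_eq_abs, abs_of_nonneg (div_nonneg hennneg hrpos.le)]
    _ ≤ (e / r) * 1 := mul_le_mul_of_nonneg_left hu (div_nonneg hennneg hrpos.le)
    _ = r⁻¹ * e := by rw [mul_one, div_eq_inv_mul]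


theorem stmt17 {m n : ℕ} (U : Set (Matrix (Fin m) (Fin n) ℝ))
    (hUne : U.Nonempty) (hUcomp : IsCompact U) (hUcv : Convex ℝ U)
    (C : Set (EuclideanSpace ℝ (Fin n)))
    (hCne : C.Nonempty) (hCcl : IsClosed C) (hCcv : Convex ℝ C)
    (Q : Set (EuclideanSpace ℝ (Fin m)))
    (hQcl : IsClosed Q) (hQcv : Convex ℝ Q)
    (hQcone : ∀ t : ℝ, 0 < t → t • Q ⊆ Q)
    (hQpointed : Q ∩ (-Q) = {0})
    (hQne0 : Q ≠ {0}) (hQneuniv : Q ≠ Set.univ)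
    (hCpoly : IsPolyhedral C)
    (hCorePoly : IsPolyhedral {x : EuclideanSpace ℝ (Fin n) | AU U x ⊆ Q})
    (hQint : (interior Q).Nonempty)
    (u : EuclideanSpace ℝ (Fin n)) (hu : ‖u‖ ≤ 1) (hSlater : AU U u ⊆ interior Q)
    (hSolv : {x | x ∈ C ∧ AU U x ⊆ Q}.Nonempty) :
    ∃ τ : ℝ, 0 < τ ∧ ∀ x : EuclideanSpace ℝ (Fin n),
      Metric.infDist x {x | x ∈ C ∧ AU U x ⊆ Q}
        ≤ τ * (exc (AU U x) Q + Metric.infDist x C) := by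
  classical
  obtain ⟨k1, v, b, hCeq⟩ := hCpoly
  obtain ⟨k2, w, c, hKeq⟩ := hCorePoly
  have hQ0 : (0 : EuclideanSpace ℝ (Fin m)) ∈ Q := by
    have h0 : (0 : EuclideanSpace ℝ (Fin m)) ∈ Q ∩ (-Q) := by
      rw [hQpointed]; exact Set.mem_singleton 0
    exact h0.1
  obtain ⟨r, hrpos, hr⟩ := core_dist_bound U hUne hUcomp Q hQcl hQcv hQcone hQ0 u hu hSlater
  set V : Fin k1 ⊕ Fin k2 → EuclideanSpace ℝ (Fin n) := Sum.elim v w with hV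
  set B : Fin k1 ⊕ Fin k2 → ℝ := Sum.elim b c with hB
  have hCmem : ∀ x, x ∈ C ↔ ∀ i, ⟪v i, x⟫ ≤ b i := fun x => by rw [hCeq]; exact Iff.rfl
  have hKmem : ∀ x : EuclideanSpace ℝ (Fin n),
      AU U x ⊆ Q ↔ ∀ i, ⟪w i, x⟫ ≤ c i := fun x => by
    have : x ∈ {x : EuclideanSpace ℝ (Fin n) | AU U x ⊆ Q} ↔
        x ∈ {x : EuclideanSpace ℝ (Fin n) | ∀ i, ⟪w i, x⟫ ≤ c i} := by rw [hKeq]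
    exact this
  have hSolveq : {x | x ∈ C ∧ AU U x ⊆ Q} =
      {x : EuclideanSpace ℝ (Fin n) | ∀ i, ⟪V i, x⟫ ≤ B i} := by
    ext x
    simp only [Set.mem_setOf_eq, Sum.forall]
    constructor
    · rintro ⟨h1, h2⟩
      exact ⟨fun j => (hCmem x).mp h1 j, fun j => (hKmem x).mp h2 j⟩
    · rintro ⟨h1, h2⟩
      exact ⟨(hCmem x).mpr h1, (hKmem x).mpr h2⟩
  obtain ⟨τ₀, hτ₀pos, hτ₀⟩ := hoffman V B (hSolveq ▸ hSolv)
  set N1 : ℝ := ∑ j, ‖v j‖ with hN1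
  set N2 : ℝ := (∑ j, ‖w j‖) * r⁻¹ with hN2
  have hN1nn : 0 ≤ N1 := Finset.sum_nonneg fun j _ => norm_nonneg _
  have hN2nn : 0 ≤ N2 := mul_nonneg (Finset.sum_nonneg fun j _ => norm_nonneg _)
    (inv_nonneg.mpr hrpos.le)
  refine ⟨τ₀ * (N1 + N2 + 1), by positivity, fun x => ?_⟩
  set dC : ℝ := Metric.infDist x C with hdC
  set e : ℝ := exc (AU U x) Q with he
  have hdCnn : 0 ≤ dC := Metric.infDist_nonneg
  have henn : 0 ≤ e := exc_nonneg_AU hUne hUcomp Q x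
  have hKne : {y : EuclideanSpace ℝ (Fin n) | AU U y ⊆ Q}.Nonempty := by
    obtain ⟨x₀, hx₀⟩ := hSolv
    exact ⟨x₀, hx₀.2⟩
  have hres1 : ∑ j, max 0 (⟪v j, x⟫ - b j) ≤ N1 * dC := by
    rw [hN1, Finset.sum_mul]
    refine Finset.sum_le_sum fun j _ => ?_
    exact residual_le (v j) (b j) C hCne (fun y hy => (hCmem y).mp hy j) x
  have hres2 : ∑ j, max 0 (⟪w j, x⟫ - c j) ≤ (∑ j, ‖w j‖) * (r⁻¹ * e) := by
    have h1 : ∑ j, max 0 (⟪w j, x⟫ - c j) ≤ (∑ j, ‖w j‖) *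
        Metric.infDist x {y : EuclideanSpace ℝ (Fin n) | AU U y ⊆ Q} := by
      rw [Finset.sum_mul]
      refine Finset.sum_le_sum fun j _ => ?_
      exact residual_le (w j) (c j) _ hKne (fun y hy => (hKmem y).mp hy j) x
    refine h1.trans (mul_le_mul_of_nonneg_left (hr x)
      (Finset.sum_nonneg fun j _ => norm_nonneg _))
  have hsplit : ∑ i, max 0 (⟪V i, x⟫ - B i) =
      (∑ j, max 0 (⟪v j, x⟫ - b j)) + ∑ j, max 0 (⟪w j, x⟫ - c j) := by
    rw [Fintype.sum_sum_type]
    rfl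
  have hmain := hτ₀ x
  rw [hsplit] at hmain
  rw [hSolveq]
  have hwsum : (∑ j, ‖w j‖) * (r⁻¹ * e) = N2 * e := by rw [hN2]; ring
  rw [hwsum] at hres2
  calc Metric.infDist x {x : EuclideanSpace ℝ (Fin n) | ∀ i, ⟪V i, x⟫ ≤ B i}
      ≤ τ₀ * ((∑ j, max 0 (⟪v j, x⟫ - b j)) + ∑ j, max 0 (⟪w j, x⟫ - c j)) := hmain
    _ ≤ τ₀ * (N1 * dC + N2 * e) := by
        refine mul_le_mul_of_nonneg_left (add_le_add hres1 hres2) hτ₀pos.le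
    _ ≤ τ₀ * (N1 + N2 + 1) * (e + dC) := by
        rw [mul_assoc τ₀ (N1 + N2 + 1) (e + dC)]
        refine mul_le_mul_of_nonneg_left ?_ hτ₀pos.le
        nlinarith [mul_nonneg hN1nn henn, mul_nonneg hN2nn hdCnn]
end
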